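/- Let M be a noncommutative prime Γ-ring. Then the identity map is the unique strong commutativity preserving endomorphism on M: if σ: M → M is an endomorphism satisfying [σ(x),σ(y)]_α = [x,y]_α for all x, y ∈ M and α ∈ Γ, then σ(x) = x for all x ∈ M. -/

import Mathlib

/-- A Γ-ring in the sense of Barnes: additive abelian groups `M` and `Γ` with a
triadditive, associative product `M × Γ × M → M`. -/
structure GammaRing (M : Type*) (Γ : Type*) [AddCommGroup M] [AddCommGroup Γ] where
  tri : M → Γ → M → M
  add_left : ∀ (a b : M) (α : Γ) (c : M), tri (a + b) α c = tri a α c + tri b α c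
  add_mid : ∀ (a : M) (α β : Γ) (b : M), tri a (α + β) b = tri a α b + tri a β b
  add_right : ∀ (a : M) (α : Γ) (b c : M), tri a α (b + c) = tri a α b + tri a α c
  assoc : ∀ (a : M) (α : Γ) (b : M) (β : Γ) (c : M),
    tri (tri a α b) β c = tri a α (tri b β c)

namespace GammaRing

variable {M Γ : Type*} [AddCommGroup M] [AddCommGroup Γ]

/-- The commutator `[a,b]_α = aαb - bαa`. -/
def comm (G : GammaRing M Γ) (a : M) (α : Γ) (b : M) : M :=
  G.tri a α b - G.tri b α a

/-- The center `Z(M)`. -/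
def center (G : GammaRing M Γ) : Set M :=
  {a | ∀ (b : M) (α : Γ), G.tri a α b = G.tri b α a}

/-- A left derivation: additive with `δ(xαy) = xαδ(y) + yαδ(x)`. -/
def IsLeftDerivation (G : GammaRing M Γ) (δ : M → M) : Prop :=
  (∀ x y : M, δ (x + y) = δ x + δ y) ∧
  ∀ (x : M) (α : Γ) (y : M), δ (G.tri x α y) = G.tri x α (δ y) + G.tri y α (δ x)

/-- A derivation: additive with `μ(xαy) = μ(x)αy + xαμ(y)`. -/
def IsDerivation (G : GammaRing M Γ) (μ : M → M) : Prop :=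
  (∀ x y : M, μ (x + y) = μ x + μ y) ∧
  ∀ (x : M) (α : Γ) (y : M), μ (G.tri x α y) = G.tri (μ x) α y + G.tri x α (μ y)

/-- An endomorphism: additive with `σ(xαy) = σ(x)ασ(y)`. -/
def IsEndomorphism (G : GammaRing M Γ) (σ : M → M) : Prop :=
  (∀ x y : M, σ (x + y) = σ x + σ y) ∧
  ∀ (x : M) (α : Γ) (y : M), σ (G.tri x α y) = G.tri (σ x) α (σ y)

/-- Semiprime: `aΓMΓa = 0` implies `a = 0`. -/
def IsSemiprime (G : GammaRing M Γ) : Prop :=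
  ∀ a : M, (∀ (α : Γ) (m : M) (β : Γ), G.tri (G.tri a α m) β a = 0) → a = 0

/-- Prime: `aΓMΓb = 0` implies `a = 0` or `b = 0`. -/
def IsPrime (G : GammaRing M Γ) : Prop :=
  ∀ a b : M, (∀ (α : Γ) (m : M) (β : Γ), G.tri (G.tri a α m) β b = 0) → a = 0 ∨ b = 0

/-- Strong commutativity preserving: `[f(x),f(y)]_α = [x,y]_α`. -/
def IsSCP (G : GammaRing M Γ) (f : M → M) : Prop :=
  ∀ (x : M) (α : Γ) (y : M), G.comm (f x) α (f y) = G.comm x α y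

end GammaRing

/-!
Write `d = σ - id`. As `σ` is multiplicative and scp, it fixes every commutator. Expanding the
scp relation for `x` and `yβz` shows that for a `σ`-fixed `k` the defects
`(mαx)γk - (mγk)αx` and `xα(kγm) - kγ(xαm)` are annihilated by `d(M)` on one side; when `d ≠ 0`,
primeness makes them vanish, and this forces `k` to be central. So all commutators are central.
But then for `c = [x,y]_α` also `cαx = [x,yαx]_α` is central, which gives `cΓ[x,M]_α = 0`, and
primeness yields `c = 0`: the Γ-ring would be commutative.
-/

namespace GammaRing

variable {M Γ : Type*} [AddCommGroup M] [AddCommGroup Γ] (G : GammaRing M Γ)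

@[simp]
theorem tri_zero_left (α : Γ) (c : M) : G.tri 0 α c = 0 :=
  (AddMonoidHom.mk' (G.tri · α c) fun a b => G.add_left a b α c).map_zero

@[simp]
theorem tri_zero_right (a : M) (α : Γ) : G.tri a α 0 = 0 :=
  (AddMonoidHom.mk' (G.tri a α) (G.add_right a α)).map_zero

theorem tri_sub_left (a b : M) (α : Γ) (c : M) :
    G.tri (a - b) α c = G.tri a α c - G.tri b α c :=
  (AddMonoidHom.mk' (G.tri · α c) fun a b => G.add_left a b α c).map_sub a b

theorem tri_sub_right (a : M) (α : Γ) (b c : M) :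
    G.tri a α (b - c) = G.tri a α b - G.tri a α c :=
  (AddMonoidHom.mk' (G.tri a α) (G.add_right a α)).map_sub b c

theorem comm_eq_zero_iff {a b : M} {α : Γ} : G.comm a α b = 0 ↔ G.tri a α b = G.tri b α a :=
  sub_eq_zero

theorem comm_tri_self (x : M) (α : Γ) (y : M) :
    G.comm x α (G.tri y α x) = G.tri (G.comm x α y) α x := by
  simp only [comm, tri_sub_left, G.assoc]

variable {G}

theorem tri_left_comm_of_mem_center {k : M} (hk : k ∈ G.center) (x : M) (α γ : Γ) (m : M) :
    G.tri x α (G.tri k γ m) = G.tri k γ (G.tri x α m) := by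
  rw [hk m γ, ← G.assoc, ← hk]

theorem IsPrime.comm_eq_zero_of_comm_mem_center (hp : G.IsPrime)
    (hcen : ∀ (a : M) (α : Γ) (b : M), G.comm a α b ∈ G.center) (x : M) (α : Γ) (y : M) :
    G.comm x α y = 0 := by
  set c := G.comm x α y
  have hc : c ∈ G.center := hcen x α y
  have hcx : G.tri c α x ∈ G.center := G.comm_tri_self x α y ▸ hcen x α (G.tri y α x)
  have hc_annihilates : ∀ (δ : Γ) (r : M), G.tri c δ (G.comm x α r) = 0 := by
    intro δ r
    rw [comm, tri_sub_right, sub_eq_zero]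
    calc G.tri c δ (G.tri x α r)
        = G.tri (G.tri c α x) δ r := by
          rw [← tri_left_comm_of_mem_center hc, ← G.assoc, ← hc x α]
      _ = G.tri r δ (G.tri c α x) := hcx r δ
      _ = G.tri c δ (G.tri r α x) := by rw [← G.assoc, ← hc r δ, G.assoc]
  refine (hp c c fun β m γ => ?_).elim id id
  rw [hc m β, G.assoc, hc_annihilates, tri_zero_right]

section Endomorphism

variable {σ : M → M}

theorem IsEndomorphism.map_sub (hσ : G.IsEndomorphism σ) (a b : M) : σ (a - b) = σ a - σ b :=
  (AddMonoidHom.mk' σ hσ.1).map_sub a b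

theorem IsSCP.map_comm (hscp : G.IsSCP σ) (hσ : G.IsEndomorphism σ) (u : M) (γ : Γ) (v : M) :
    σ (G.comm u γ v) = G.comm u γ v := by
  rw [comm, hσ.map_sub, hσ.2, hσ.2]
  exact hscp u γ v

theorem IsPrime.eq_zero_of_tri_sub_left (hp : G.IsPrime) (hσ : G.IsEndomorphism σ) {x₀ : M}
    (hx₀ : σ x₀ ≠ x₀) {e : M} (he : ∀ (γ : Γ) (w : M), G.tri e γ (σ w - w) = 0) : e = 0 := by
  refine (hp e (σ x₀ - x₀) fun α w β => ?_).resolve_right (sub_ne_zero.mpr hx₀)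
  have hexpand : G.tri w β (σ x₀ - x₀) = (σ (G.tri w β x₀) - G.tri w β x₀)
      - G.tri (σ w - w) β x₀ - G.tri (σ w - w) β (σ x₀ - x₀) := by
    rw [hσ.2]
    simp only [tri_sub_left, tri_sub_right]
    abel
  rw [G.assoc, hexpand, tri_sub_right, tri_sub_right]
  simp [← G.assoc, he]

theorem IsPrime.eq_zero_of_sub_tri_right (hp : G.IsPrime) (hσ : G.IsEndomorphism σ) {x₀ : M}
    (hx₀ : σ x₀ ≠ x₀) {e : M} (he : ∀ (γ : Γ) (w : M), G.tri (σ w - w) γ e = 0) : e = 0 := by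
  refine (hp (σ x₀ - x₀) e fun α w β => ?_).resolve_left (sub_ne_zero.mpr hx₀)
  have hexpand : G.tri (σ x₀ - x₀) α w = (σ (G.tri x₀ α w) - G.tri x₀ α w)
      - G.tri x₀ α (σ w - w) - G.tri (σ x₀ - x₀) α (σ w - w) := by
    rw [hσ.2]
    simp only [tri_sub_left, tri_sub_right]
    abel
  rw [hexpand, tri_sub_left, tri_sub_left]
  simp [G.assoc, he]

/-- The scp relation for `x` and `yβz`, minus those for `(x, y)` and `(x, z)` suitably multiplied. -/
theorem IsSCP.master_identity (hscp : G.IsSCP σ) (hσ : G.IsEndomorphism σ) (x y z : M)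
    (α β : Γ) :
    G.tri (G.comm x α y) β (σ z - z) + G.tri (σ y - y) β (G.comm x α z)
      + (G.tri (G.tri (σ y) α (σ x)) β (σ z) - G.tri (G.tri y α x) β z)
      - (G.tri (G.tri (σ y) β (σ x)) α (σ z) - G.tri (G.tri y β x) α z) = 0 := by
  have hyz : G.comm (σ x) α (G.tri (σ y) β (σ z)) = G.comm x α (G.tri y β z) := by
    rw [← hσ.2]
    exact hscp x α (G.tri y β z)
  have hexpand : G.tri (G.comm x α y) β (σ z - z) + G.tri (σ y - y) β (G.comm x α z)
      + (G.tri (G.tri (σ y) α (σ x)) β (σ z) - G.tri (G.tri y α x) β z)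
      - (G.tri (G.tri (σ y) β (σ x)) α (σ z) - G.tri (G.tri y β x) α z)
      = G.tri (G.comm x α y - G.comm (σ x) α (σ y)) β (σ z)
        - (G.comm x α (G.tri y β z) - G.comm (σ x) α (G.tri (σ y) β (σ z)))
        + G.tri (σ y) β (G.comm x α z - G.comm (σ x) α (σ z)) := by
    simp only [comm, tri_sub_left, tri_sub_right, G.assoc]
    abel
  rw [hexpand, hscp x α y, hscp x α z, hyz]
  simp

theorem IsSCP.tri_sub_right_comm_eq_zero (hscp : G.IsSCP σ) (hσ : G.IsEndomorphism σ) {k : M}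
    (hk : σ k = k) (y m x : M) (α β γ : Γ) :
    G.tri (σ y - y) β (G.tri (G.tri m α x) γ k - G.tri (G.tri m γ k) α x) = 0 := by
  have hmk := hscp.master_identity hσ x y (G.tri m γ k) α β
  rw [hσ.2, hk] at hmk
  have hm := hscp.master_identity hσ x y m α β
  have hexpand : G.tri (σ y - y) β (G.tri (G.tri m α x) γ k - G.tri (G.tri m γ k) α x)
      = (G.tri (G.comm x α y) β (G.tri (σ m) γ k - G.tri m γ k)
          + G.tri (σ y - y) β (G.comm x α (G.tri m γ k))
          + (G.tri (G.tri (σ y) α (σ x)) β (G.tri (σ m) γ k)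
              - G.tri (G.tri y α x) β (G.tri m γ k))
          - (G.tri (G.tri (σ y) β (σ x)) α (G.tri (σ m) γ k)
              - G.tri (G.tri y β x) α (G.tri m γ k)))
        - G.tri (G.tri (G.comm x α y) β (σ m - m) + G.tri (σ y - y) β (G.comm x α m)
            + (G.tri (G.tri (σ y) α (σ x)) β (σ m) - G.tri (G.tri y α x) β m)
            - (G.tri (G.tri (σ y) β (σ x)) α (σ m) - G.tri (G.tri y β x) α m)) γ k := by
    simp only [comm, tri_sub_left, tri_sub_right, G.add_left, G.assoc]
    abel
  rw [hexpand, hmk, hm, tri_zero_left, sub_zero]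

theorem IsSCP.left_comm_sub_tri_eq_zero (hscp : G.IsSCP σ) (hσ : G.IsEndomorphism σ) {k : M}
    (hk : σ k = k) (x m z : M) (α β γ : Γ) :
    G.tri (G.tri x α (G.tri k γ m) - G.tri k γ (G.tri x α m)) β (σ z - z) = 0 := by
  have hkm := hscp.master_identity hσ x (G.tri k γ m) z α β
  rw [hσ.2, hk] at hkm
  have hm := hscp.master_identity hσ x m z α β
  have hexpand : G.tri (G.tri x α (G.tri k γ m) - G.tri k γ (G.tri x α m)) β (σ z - z)
      = (G.tri (G.comm x α (G.tri k γ m)) β (σ z - z)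
          + G.tri (G.tri k γ (σ m) - G.tri k γ m) β (G.comm x α z)
          + (G.tri (G.tri (G.tri k γ (σ m)) α (σ x)) β (σ z)
              - G.tri (G.tri (G.tri k γ m) α x) β z)
          - (G.tri (G.tri (G.tri k γ (σ m)) β (σ x)) α (σ z)
              - G.tri (G.tri (G.tri k γ m) β x) α z))
        - G.tri k γ (G.tri (G.comm x α m) β (σ z - z) + G.tri (σ m - m) β (G.comm x α z)
            + (G.tri (G.tri (σ m) α (σ x)) β (σ z) - G.tri (G.tri m α x) β z)
            - (G.tri (G.tri (σ m) β (σ x)) α (σ z) - G.tri (G.tri m β x) α z)) := by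
    simp only [comm, tri_sub_left, tri_sub_right, G.add_right, G.assoc]
    abel
  rw [hexpand, hkm, hm, tri_zero_right, sub_zero]

theorem IsPrime.tri_right_comm_of_fixed (hp : G.IsPrime) (hσ : G.IsEndomorphism σ)
    (hscp : G.IsSCP σ) {x₀ : M} (hx₀ : σ x₀ ≠ x₀) {k : M} (hk : σ k = k) (m x : M) (α γ : Γ) :
    G.tri (G.tri m α x) γ k = G.tri (G.tri m γ k) α x :=
  sub_eq_zero.mp <| hp.eq_zero_of_sub_tri_right hσ hx₀ fun β y =>
    hscp.tri_sub_right_comm_eq_zero hσ hk y m x α β γ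

theorem IsPrime.tri_left_comm_of_fixed (hp : G.IsPrime) (hσ : G.IsEndomorphism σ)
    (hscp : G.IsSCP σ) {x₀ : M} (hx₀ : σ x₀ ≠ x₀) {k : M} (hk : σ k = k) (x m : M) (α γ : Γ) :
    G.tri x α (G.tri k γ m) = G.tri k γ (G.tri x α m) :=
  sub_eq_zero.mp <| hp.eq_zero_of_tri_sub_left hσ hx₀ fun β z =>
    hscp.left_comm_sub_tri_eq_zero hσ hk x m z α β γ

theorem IsPrime.mem_center_of_fixed (hp : G.IsPrime) (hσ : G.IsEndomorphism σ)
    (hscp : G.IsSCP σ) {x₀ : M} (hx₀ : σ x₀ ≠ x₀) {k : M} (hk : σ k = k) : k ∈ G.center := by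
  have hright := hp.tri_right_comm_of_fixed hσ hscp hx₀ hk
  have hleft := hp.tri_left_comm_of_fixed hσ hscp hx₀ hk
  have hcomm_tri : ∀ (x : M) (γ β : Γ), G.tri (G.comm x γ k) β k = 0 := by
    intro x γ β
    rw [comm, tri_sub_left, sub_eq_zero]
    calc G.tri (G.tri x γ k) β k
        = G.tri (G.tri k γ k) β x := by rw [G.assoc, hleft, ← G.assoc, hright]
      _ = G.tri (G.tri k β k) γ x := by rw [G.assoc, G.assoc, hleft]
      _ = G.tri (G.tri k γ x) β k := (hright k x γ β).symm
  intro x δ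
  have hzero : ∀ (α : Γ) (m : M) (β : Γ), G.tri (G.tri (G.comm x δ k) α m) β k = 0 :=
    fun α m β => by rw [hright, hcomm_tri, tri_zero_left]
  rcases hp _ k hzero with h | rfl
  · exact (G.comm_eq_zero_iff.mp h).symm
  · simp

end Endomorphism

end GammaRing

/-- On a noncommutative prime Γ-ring, the identity is the unique scp
endomorphism. -/
theorem noncommutative_prime_scp_endomorphism_eq_id {M Γ : Type*}
    [AddCommGroup M] [AddCommGroup Γ] (G : GammaRing M Γ) (hp : G.IsPrime)
    (hnc : ∃ (a b : M) (α : Γ), G.tri a α b ≠ G.tri b α a)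
    (σ : M → M) (hσ : G.IsEndomorphism σ) (hscp : G.IsSCP σ) :
    ∀ x : M, σ x = x := by
  intro x₀
  by_contra hx₀
  obtain ⟨a, b, α, hab⟩ := hnc
  have hcen : ∀ (u : M) (γ : Γ) (v : M), G.comm u γ v ∈ G.center := fun u γ v =>
    hp.mem_center_of_fixed hσ hscp hx₀ (hscp.map_comm hσ u γ v)
  exact hab (G.comm_eq_zero_iff.mp (hp.comm_eq_zero_of_comm_mem_center hcen a α b))
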